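/- arXiv:2408.13630 — 2 statements merged into one kernel-verified Lean document; each statement's English description precedes it below -/
import Mathlib

section
/- The tournament embedding T_T does not preserve the probabilistic Schulze rule: there exist two profiles with equal tournament matrices whose probabilistic Schulze lotteries differ. -/
/-!
Framework: candidates are `Fin m`.  A ballot is a strict linear order on the
candidates, represented by its (0-indexed) rank function, a bijection
`Fin m ≃ Fin m` sending each candidate to its position.  A profile is a finite
list of ballots (one per voter).  A lottery on the candidates is represented by
its probability mass function `Fin m → ℚ`, and a probabilistic social choice
function (PSCF) maps profiles to lotteries.
-/

/-- A ballot: each candidate is assigned a distinct (0-indexed) rank;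
rank `0` is the most preferred position. -/
abbrev Ballot (m : ℕ) := Fin m ≃ Fin m

/-- A profile is a finite list of ballots, one per voter. -/
abbrev Profile (m : ℕ) := List (Ballot m)

/-- `wt X a b` is the number of voters in `X` who strictly prefer `a` to `b`
(i.e. rank `a` above `b`). -/
def wt {m : ℕ} (X : Profile m) (a b : Fin m) : ℕ :=
  X.countP (fun x => decide (x a < x b))

/-- The uniform lottery over a finite set `W` of candidates
(probability `1/|W|` on members of `W`, probability `0` elsewhere). -/
def unif {m : ℕ} (W : Finset (Fin m)) : Fin m → ℚ :=
  fun c => if c ∈ W then ((W.card : ℚ))⁻¹ else 0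

/-- The set of candidates attaining the maximum value of the score `s`. -/
def argmaxSet {m : ℕ} {α : Type*} [LinearOrder α] (s : Fin m → α) : Finset (Fin m) :=
  Finset.univ.filter (fun c => ∀ d, s d ≤ s c)

/-- The set of candidates attaining the minimum value of the score `s`. -/
def argminSet {m : ℕ} {α : Type*} [LinearOrder α] (s : Fin m → α) : Finset (Fin m) :=
  Finset.univ.filter (fun c => ∀ d, s c ≤ s d)

/-- An embedding `T` preserves a PSCF `f` if there exists `f'` with
`f' (T X) = f X` for all profiles `X`. -/
def Preserves {m : ℕ} {X' : Type*} (T : Profile m → X') (f : Profile m → Fin m → ℚ) : Prop :=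
  ∃ f' : X' → Fin m → ℚ, ∀ X : Profile m, f' (T X) = f X

/-- Weighted tournament embedding: `(T_WT X) j k = |{voters i : j ≻ᵢ k}|`. -/
def T_WT {m : ℕ} (X : Profile m) : Fin m → Fin m → ℕ :=
  fun a b => wt X a b

/-- Tournament embedding: entry `1` if a strict majority prefers `j` to `k`,
`0` if a strict majority prefers `k` to `j`, and `1/2` on ties. -/
def T_T {m : ℕ} (X : Profile m) : Fin m → Fin m → ℚ :=
  fun a b =>
    if wt X b a < wt X a b then 1
    else if wt X a b < wt X b a then 0
    else 1/2

/-- Rank frequency embedding: `(T_RF X) c k` is the number of voters ranking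
candidate `c` in position `k`. -/
def T_RF {m : ℕ} (X : Profile m) : Fin m → Fin m → ℕ :=
  fun c k => X.countP (fun x => decide (x c = k))

/-- Plurality score of `c`: the number of voters ranking `c` first. -/
def pluralityScore {m : ℕ} (X : Profile m) (c : Fin m) : ℕ :=
  X.countP (fun x => decide ((x c : ℕ) = 0))

/-- Probabilistic Plurality rule: the uniform lottery over the candidates with
maximum plurality score. -/
def plurality {m : ℕ} (X : Profile m) : Fin m → ℚ :=
  unif (argmaxSet (pluralityScore X))

/-- Borda score of `c`: `Σ_i (m − x_i(c))` where `x_i(c) ∈ {1,…,m}` is the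
(1-indexed) rank of `c` on voter `i`'s ballot. -/
def bordaScore {m : ℕ} (X : Profile m) (c : Fin m) : ℕ :=
  (X.map (fun x => m - ((x c : ℕ) + 1))).sum

/-- Probabilistic Borda rule: the uniform lottery over the candidates with
maximum Borda score. -/
def borda {m : ℕ} (X : Profile m) : Fin m → ℚ :=
  unif (argmaxSet (bordaScore X))

/-- Copeland score of `c`: `1` for every other candidate beaten by `c` in a
strict pairwise majority and `1/2` for every pairwise tie. -/
def copelandScore {m : ℕ} (X : Profile m) (c : Fin m) : ℚ :=
  ∑ b ∈ Finset.univ.filter (fun b => b ≠ c),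
    (if wt X b c < wt X c b then 1 else if wt X c b < wt X b c then 0 else 1/2)

/-- Probabilistic Copeland rule: the uniform lottery over the candidates with
maximum Copeland score. -/
def copeland {m : ℕ} (X : Profile m) : Fin m → ℚ :=
  unif (argmaxSet (copelandScore X))

/-- `max_{b ≠ c} d(b,c)`: the maximum weight of an incoming pairwise defeat. -/
def maxIncoming {m : ℕ} (X : Profile m) (c : Fin m) : ℕ :=
  (Finset.univ.filter (fun b => b ≠ c)).sup (fun b => wt X b c)

/-- Probabilistic Simpson-Kramer (Maximin) rule: the uniform lottery over the
candidates minimizing `max_{b ≠ c} d(b,c)`. -/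
def simpsonKramer {m : ℕ} (X : Profile m) : Fin m → ℚ :=
  unif (argminSet (maxIncoming X))

/-- `a` beats `b` by a strict pairwise majority in `X`. -/
def Beats {m : ℕ} (X : Profile m) (a b : Fin m) : Prop :=
  wt X b a < wt X a b

/-- `l` is (the vertex list of) a directed path from `a` to `b` in the majority
graph `G_X`: consecutive vertices are majority defeats. -/
def IsMajPath {m : ℕ} (X : Profile m) (a b : Fin m) (l : List (Fin m)) : Prop :=
  2 ≤ l.length ∧ l.head? = some a ∧ l.getLast? = some b ∧ l.Chain' (Beats X)

/-- Strength of a path: the minimum weight `d(u,v)` over its consecutive edges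
(the initial value `X.length` is an upper bound for all edge weights, so it does
not affect the minimum for an actual path). -/
def pathStrength {m : ℕ} (X : Profile m) (l : List (Fin m)) : ℕ :=
  ((l.zip l.tail).map (fun e => wt X e.1 e.2)).foldr min X.length

/-- Schulze strength `p(a,b)`: the maximum strength of a directed path from
`a` to `b` in `G_X`, and `0` if there is no such path. -/
noncomputable def schulzeP {m : ℕ} (X : Profile m) (a b : Fin m) : ℕ :=
  sSup {s | ∃ l, IsMajPath X a b l ∧ pathStrength X l = s}

open Classical in
/-- Schulze winners: `W(X) = {a : p(a,b) ≥ p(b,a) for all b}`. -/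
noncomputable def schulzeWinners {m : ℕ} (X : Profile m) : Finset (Fin m) :=
  Finset.univ.filter (fun a => ∀ b, schulzeP X b a ≤ schulzeP X a b)

/-- Probabilistic Schulze rule: the uniform lottery over the Schulze winners. -/
noncomputable def schulze {m : ℕ} (X : Profile m) : Fin m → ℚ :=
  unif (schulzeWinners X)

/-- Plurality score of `c` among the remaining candidates `S`: the number of
voters whose most preferred candidate within `S` is `c`. -/
def irvScore {m : ℕ} (X : Profile m) (S : Finset (Fin m)) (c : Fin m) : ℕ :=
  X.countP (fun x => decide (c ∈ S ∧ ∀ d ∈ S, x c ≤ x d))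

/-- One round of IRV: eliminate from `S` the candidate with the lowest
plurality score among `S`, breaking ties by the fixed (lexicographic) order on
`Fin m` (i.e. the least such candidate is eliminated). -/
def irvStep {m : ℕ} (X : Profile m) (S : Finset (Fin m)) : Finset (Fin m) :=
  S.filter (fun c => ¬ ((∀ d ∈ S, irvScore X S c ≤ irvScore X S d) ∧
    ∀ d ∈ S, (∀ e ∈ S, irvScore X S d ≤ irvScore X S e) → c ≤ d))

/-- The candidates surviving all `m - 1` IRV elimination rounds. -/
def irvWinners {m : ℕ} (X : Profile m) : Finset (Fin m) :=
  (irvStep X)^[m - 1] Finset.univ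

/-- Probabilistic IRV: all probability mass on the candidate never
eliminated. -/
def irv {m : ℕ} (X : Profile m) : Fin m → ℚ :=
  unif (irvWinners X)

/-- `c` is a Condorcet winner: it beats every other candidate by a strict
pairwise majority. -/
def IsCondorcetWinner {m : ℕ} (X : Profile m) (c : Fin m) : Prop :=
  ∀ b, b ≠ c → wt X b c < wt X c b

/-- Winners of Black's rule: the Condorcet winner if one exists, otherwise the
candidates with maximum Borda score. -/
def blackWinners {m : ℕ} (X : Profile m) : Finset (Fin m) :=
  let cw := Finset.univ.filter (fun c => ∀ b, b ≠ c → wt X b c < wt X c b)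
  if cw.Nonempty then cw else argmaxSet (bordaScore X)

/-- Probabilistic Black's rule. -/
def black {m : ℕ} (X : Profile m) : Fin m → ℚ :=
  unif (blackWinners X)

/-- Probabilistic positional scoring rule for a score vector `s` (indexed by
position): candidate `c` gets total score `Σ_i s (x_i c)`, and the rule returns
the uniform lottery over the candidates of maximum total score. -/
noncomputable def scoringRule {m : ℕ} (s : Fin m → ℝ) (X : Profile m) : Fin m → ℚ :=
  unif (argmaxSet (fun c => (X.map (fun x => s (x c))).sum))

/-!
In the cyclic profile `0 ≻ 1 ≻ 2`, `1 ≻ 2 ≻ 0`, `2 ≻ 0 ≻ 1` every majority defeat has weight 2,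
so every candidate is a Schulze winner. Adding one voter `0 ≻ 1 ≻ 2` and one voter `2 ≻ 0 ≻ 1`
keeps the majority cycle `0 → 1 → 2 → 0`, hence the tournament, but now `p(0,1) = 4` while every
path out of `1` starts with the defeat `1 → 2` of weight 3, so `1` is no longer a winner.
-/

theorem not_preserves_of_map_eq_of_ne {m : ℕ} {X' : Type*} {T : Profile m → X'}
    {f : Profile m → Fin m → ℚ} {X Y : Profile m} (hT : T X = T Y) (hf : f X ≠ f Y) :
    ¬ Preserves T f := by
  rintro ⟨f', hf'⟩
  exact hf (by rw [← hf' X, ← hf' Y, hT])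

theorem unif_ne_of_mem_of_notMem {m : ℕ} {W W' : Finset (Fin m)} {c : Fin m} (hW : c ∈ W)
    (hW' : c ∉ W') : unif W ≠ unif W' := by
  intro h
  have hc := congrFun h c
  simp only [unif, if_pos hW, if_neg hW', inv_eq_zero, Nat.cast_eq_zero] at hc
  exact Finset.card_ne_zero_of_mem hW hc

instance {m : ℕ} (X : Profile m) (a b : Fin m) : Decidable (Beats X a b) :=
  inferInstanceAs (Decidable (_ < _))

instance {m : ℕ} (X : Profile m) (a b : Fin m) (l : List (Fin m)) :
    Decidable (IsMajPath X a b l) :=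
  inferInstanceAs (Decidable (_ ∧ _ ∧ _ ∧ List.IsChain (Beats X) l))

section Schulze

variable {m : ℕ} (X : Profile m)

theorem pathStrength_le_length (l : List (Fin m)) : pathStrength X l ≤ X.length := by
  unfold pathStrength
  induction (l.zip l.tail).map (fun e => wt X e.1 e.2) with
  | nil => exact le_rfl
  | cons w ws ih => exact (min_le_right _ _).trans ih

theorem le_schulzeP_of_isMajPath {a b : Fin m} (l : List (Fin m)) {k : ℕ}
    (hl : IsMajPath X a b l) (hk : k ≤ pathStrength X l) : k ≤ schulzeP X a b :=
  hk.trans <|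
    le_csSup ⟨X.length, by rintro _ ⟨l', -, rfl⟩; exact pathStrength_le_length X l'⟩ ⟨l, hl, rfl⟩

theorem pathStrength_le_wt_of_isMajPath {a b : Fin m} {l : List (Fin m)}
    (hl : IsMajPath X a b l) : ∃ v, Beats X a v ∧ pathStrength X l ≤ wt X a v := by
  obtain ⟨hlen, hhead, -, hchain⟩ := hl
  match l, hlen, hhead, hchain with
  | x :: y :: _, _, hhead, hchain =>
    obtain rfl : x = a := by simpa using hhead
    exact ⟨y, (List.isChain_cons_cons.1 hchain).1, min_le_left _ _⟩

theorem schulzeP_le_of_forall_beats {a : Fin m} {k : ℕ} (h : ∀ v, Beats X a v → wt X a v ≤ k)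
    (b : Fin m) : schulzeP X a b ≤ k := by
  refine csSup_le' ?_
  rintro _ ⟨l, hl, rfl⟩
  obtain ⟨v, hv, hle⟩ := pathStrength_le_wt_of_isMajPath X hl
  exact hle.trans (h v hv)

end Schulze

/-- A ballot is a rank function: `finRotate 3` is the ballot `2 ≻ 0 ≻ 1`, its inverse
`1 ≻ 2 ≻ 0`. -/
def cyclicProfile : Profile 3 := [Equiv.refl _, (finRotate 3).symm, finRotate 3]

def skewedCyclicProfile : Profile 3 :=
  [Equiv.refl _, Equiv.refl _, (finRotate 3).symm, finRotate 3, finRotate 3]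

theorem T_T_cyclicProfile_eq : T_T cyclicProfile = T_T skewedCyclicProfile := by
  funext a b
  fin_cases a <;> fin_cases b <;> rfl

theorem one_mem_schulzeWinners_cyclicProfile : 1 ∈ schulzeWinners cyclicProfile := by
  have hp10 : 2 ≤ schulzeP cyclicProfile 1 0 :=
    le_schulzeP_of_isMajPath _ [1, 2, 0] (by decide) (by decide)
  have hp12 : 2 ≤ schulzeP cyclicProfile 1 2 :=
    le_schulzeP_of_isMajPath _ [1, 2] (by decide) (by decide)
  simp only [schulzeWinners, Finset.mem_filter, Finset.mem_univ, true_and, Fin.forall_fin_succ,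
    IsEmpty.forall_iff]
  exact ⟨(schulzeP_le_of_forall_beats _ (by decide) _).trans hp10, le_rfl,
    (schulzeP_le_of_forall_beats _ (by decide) _).trans hp12, trivial⟩

theorem one_notMem_schulzeWinners_skewedCyclicProfile :
    1 ∉ schulzeWinners skewedCyclicProfile := by
  have hp10 : schulzeP skewedCyclicProfile 1 0 ≤ 3 := schulzeP_le_of_forall_beats _ (by decide) _
  have hp01 : 4 ≤ schulzeP skewedCyclicProfile 0 1 :=
    le_schulzeP_of_isMajPath _ [0, 1] (by decide) (by decide)
  simp only [schulzeWinners, Finset.mem_filter, Finset.mem_univ, true_and, not_forall, not_le]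
  exact ⟨0, by omega⟩

/-- The tournament embedding does not preserve the probabilistic
Schulze rule: there exist two profiles with equal tournament matrices whose
probabilistic Schulze lotteries differ. -/
theorem tt_not_preserves_schulze :
    ∃ m : ℕ, ¬ Preserves (T_T (m := m)) schulze ∧
      ∃ X Y : Profile m, T_T X = T_T Y ∧ schulze X ≠ schulze Y := by
  have hT := T_T_cyclicProfile_eq
  have hf : schulze cyclicProfile ≠ schulze skewedCyclicProfile :=
    unif_ne_of_mem_of_notMem one_mem_schulzeWinners_cyclicProfile
      one_notMem_schulzeWinners_skewedCyclicProfile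
  exact ⟨3, not_preserves_of_map_eq_of_ne hT hf, _, _, hT, hf⟩
end

section
/- The tournament embedding T_T does not preserve probabilistic Instant Runoff Voting (IRV): there exist two profiles with equal tournament matrices whose probabilistic IRV lotteries differ. -/
/-- Helper: build a ballot from a rank vector. -/
noncomputable def mkB (r : Fin 3 → Fin 3) (h1 : Function.Bijective r := by decide) : Ballot 3 :=
  Equiv.ofBijective r h1

/-- The tournament embedding does not preserve the probabilistic
IRV rule: there exist two profiles with equal tournament matrices whose
probabilistic IRV lotteries differ. -/
theorem tt_not_preserves_irv :
    ∃ m : ℕ, ¬ Preserves (T_T (m := m)) irv ∧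
      ∃ X Y : Profile m, T_T X = T_T Y ∧ irv X ≠ irv Y := by
  refine ⟨3, ?_⟩
  set X : Profile 3 := [mkB ![0,1,2], mkB ![2,1,0]] with hXdef
  set Y : Profile 3 := [mkB ![0,2,1], mkB ![2,0,1]] with hYdef
  have hwt : ∀ a b, wt X a b = wt Y a b := by decide
  have hT : T_T X = T_T Y := by
    funext a b
    simp only [T_T, hwt]
  have hWX : irvWinners X = {2} := by decide
  have hWY : irvWinners Y = {1} := by decide
  have hirv : irv X ≠ irv Y := by
    intro h
    have := congrFun h 2
    rw [irv, irv, hWX, hWY] at this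
    simp [unif] at this
  refine ⟨?_, X, Y, hT, hirv⟩
  rintro ⟨f', hf'⟩
  exact hirv (by rw [← hf' X, ← hf' Y, hT])
end
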